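/- Let ν ∈ ℝ with ν > −1 and 0 < a₁ ≤ a_j. Let γ : ℝ → ℂ be a continuously differentiable curve such that: |γ'(u)| ≤ M for all u; γ(u) ∉ (−∞, 0] for all u; |γ(u)| ≥ r > 0 for all u; Re γ(u) ≤ −c|u| + C for all u, with constants c > 0 and C; and inf_{u,v ∈ ℝ} |γ(u) − 1/γ(v)| ≥ d > 0. Then the double integral ∬_{ℝ×ℝ} | (1/γ(v))^{ν} · exp( −a_j/γ(v) + γ(v)/4 ) · exp( γ(u)·(a_j − a₁/2) ) / ( γ(u) − 1/γ(v) ) |² · |γ'(u)| · |γ'(v)|/|γ(v)|² du dv is finite, where z^{ν} := exp(ν Log z) with the principal logarithm. -/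

import Mathlib

open MeasureTheory Set

/-!
Along the contours the kernel factorises, up to the bounded denominator `γ(u) - 1/γ(v)`
(at distance at least `d` from `0`), into a function of `u` times a function of `v`.
Since `Re γ(u) ≤ C - c|u|` and `a_j - a₁/2 > 0`, the factor `e^{γ(u)(a_j - a₁/2)}` decays like
`e^{-(a_j - a₁/2) c |u|}`. In `v`, the factor `e^{γ(v)/4}` decays like `e^{-c|v|/4}` and beats
`|γ(v)|^{-ν}`, which grows at most polynomially because `γ` is Lipschitz; `e^{-a_j/γ(v)}` and
the Jacobian factors are bounded because `|γ| ≥ r` and `|γ'| ≤ M`. The integrand is thus dominated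
by a product of two integrable exponentials.
-/

lemma integrable_exp_neg_mul_abs {b : ℝ} (hb : 0 < b) :
    Integrable fun x : ℝ => Real.exp (-b * |x|) := by
  rw [← integrableOn_univ, ← Iic_union_Ioi (a := (0 : ℝ))]
  refine IntegrableOn.union ?_ ?_
  · refine (integrableOn_exp_mul_Iic hb 0).congr_fun (fun x hx => ?_) measurableSet_Iic
    simp [abs_of_nonpos (mem_Iic.1 hx)]
  · refine (integrableOn_exp_mul_Ioi (neg_neg_of_pos hb) 0).congr_fun (fun x hx => ?_)
      measurableSet_Ioi
    simp [abs_of_pos (mem_Ioi.1 hx)]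

lemma integrable_of_norm_le_exp_neg_mul_abs_prod {f : ℝ × ℝ → ℝ} {K α β : ℝ}
    (hα : 0 < α) (hβ : 0 < β) (hf : AEStronglyMeasurable f)
    (hle : ∀ p, ‖f p‖ ≤ K * (Real.exp (-α * |p.1|) * Real.exp (-β * |p.2|))) :
    Integrable f := by
  have hprod := (integrable_exp_neg_mul_abs hα).mul_prod (integrable_exp_neg_mul_abs hβ)
  rw [← Measure.volume_eq_prod] at hprod
  exact (hprod.const_mul K).mono' hf (ae_of_all _ hle)

lemma norm_le_norm_zero_add_mul_abs {E : Type*} [NormedAddCommGroup E] [NormedSpace ℝ E]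
    {γ : ℝ → E} (hγ : Differentiable ℝ γ) {M : ℝ} (hM : ∀ u, ‖deriv γ u‖ ≤ M) (v : ℝ) :
    ‖γ v‖ ≤ ‖γ 0‖ + M * |v| := by
  have hLip := convex_univ.norm_image_sub_le_of_norm_deriv_le (fun x _ => hγ x)
    (fun x _ => hM x) (mem_univ 0) (mem_univ v)
  rw [sub_zero, Real.norm_eq_abs] at hLip
  linarith [norm_le_insert' (γ v) (γ 0)]

lemma exists_mul_log_le_add_mul (ν : ℝ) {r R M ε : ℝ} (hr : 0 < r) (hM : 0 ≤ M)
    (hε : 0 < ε) :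
    ∃ K, ∀ x t : ℝ, r ≤ x → x ≤ R + M * t → 0 ≤ t → ν * Real.log x ≤ K + ε * t := by
  rcases le_or_gt ν 0 with hν | hν
  · refine ⟨ν * Real.log r, fun x t hrx _ ht => ?_⟩
    linarith [mul_le_mul_of_nonpos_left (Real.log_le_log hr hrx) hν, mul_nonneg hε.le ht]
  · set A := ν * M / ε + 1
    have hA : 0 < A := by positivity
    refine ⟨ν * Real.log A + ν * R / A, fun x t hrx hxR ht => ?_⟩
    have hx : 0 < x := hr.trans_le hrx
    -- the tangent line of `log` at `A`, whose slope `1 / A` is small enough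
    have htangent : Real.log x ≤ Real.log A + x / A := by
      have := Real.log_le_sub_one_of_pos (div_pos hx hA)
      rw [Real.log_div hx.ne' hA.ne'] at this
      linarith
    have hslope : ν * M / A ≤ ε := by
      rw [div_le_iff₀ hA, mul_add, mul_div_cancel₀ _ hε.ne']
      linarith
    calc ν * Real.log x ≤ ν * (Real.log A + (R + M * t) / A) := by
          gcongr
          exact htangent.trans (by gcongr)
      _ = ν * Real.log A + ν * R / A + ν * M / A * t := by ring
      _ ≤ ν * Real.log A + ν * R / A + ε * t := by gcongr

/-- The kernel `2πi · ℬ_{a_j}(1/γ(v), γ(u))`, with `s^ν = exp (ν Log s)`. -/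
noncomputable def besselBKernel (ν a₁ aj : ℝ) (γ : ℝ → ℂ) (u v : ℝ) : ℂ :=
  Complex.exp (ν * Complex.log (γ v)⁻¹) * Complex.exp (-aj / γ v + γ v / 4) *
    Complex.exp (γ u * (aj - a₁ / 2)) / (γ u - (γ v)⁻¹)

lemma measurable_besselBKernel (ν a₁ aj : ℝ) {γ : ℝ → ℂ} (hγ : Measurable γ) :
    Measurable fun p : ℝ × ℝ => besselBKernel ν a₁ aj γ p.1 p.2 := by
  unfold besselBKernel
  fun_prop

lemma norm_besselBKernel (ν a₁ aj : ℝ) (γ : ℝ → ℂ) (u v : ℝ) :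
    ‖besselBKernel ν a₁ aj γ u v‖ =
      Real.exp (-ν * Real.log ‖γ v‖ + (-aj / γ v + γ v / 4).re + (aj - a₁ / 2) * (γ u).re) /
        ‖γ u - (γ v)⁻¹‖ := by
  have hre : (γ u * ((aj : ℂ) - a₁ / 2)).re = (aj - a₁ / 2) * (γ u).re := by
    rw [show (aj : ℂ) - a₁ / 2 = ((aj - a₁ / 2 : ℝ) : ℂ) by push_cast; ring]
    simp [mul_comm]
  simp only [besselBKernel, norm_div, norm_mul, Complex.norm_exp, ← Real.exp_add, hre]
  simp [Complex.log_re]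

lemma re_div_le_of_le_norm {w z : ℂ} {r : ℝ} (hr : 0 < r) (hz : r ≤ ‖z‖) :
    (w / z).re ≤ ‖w‖ / r :=
  calc (w / z).re ≤ ‖w / z‖ := Complex.re_le_norm _
    _ = ‖w‖ / ‖z‖ := norm_div w z
    _ ≤ ‖w‖ / r := by gcongr

section Contour

variable {γ : ℝ → ℂ} {M r c C d : ℝ}

lemma exists_norm_besselBKernel_le (hγ : Differentiable ℝ γ) (hM : ∀ u, ‖deriv γ u‖ ≤ M)
    (hr : 0 < r) (hlow : ∀ u, r ≤ ‖γ u‖) (hre : ∀ u, (γ u).re ≤ -c * |u| + C)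
    (hd : 0 < d) (hsep : ∀ u v, d ≤ ‖γ u - (γ v)⁻¹‖) (hc : 0 < c)
    (ν : ℝ) {a₁ aj : ℝ} (hb : 0 < aj - a₁ / 2) :
    ∃ K, ∀ u v, ‖besselBKernel ν a₁ aj γ u v‖ ≤
      K * (Real.exp (-((aj - a₁ / 2) * c) * |u|) * Real.exp (-(c / 8) * |v|)) := by
  obtain ⟨K, hK⟩ := exists_mul_log_le_add_mul (-ν) hr ((norm_nonneg _).trans (hM 0))
    (by positivity : 0 < c / 8)
  refine ⟨Real.exp (K + |aj| / r + C / 4 + (aj - a₁ / 2) * C) / d, fun u v => ?_⟩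
  have hlog := hK _ _ (hlow v) (norm_le_norm_zero_add_mul_abs hγ hM v) (abs_nonneg v)
  have hinv : (-(aj : ℂ) / γ v).re ≤ |aj| / r := by
    simpa using re_div_le_of_le_norm (w := -(aj : ℂ)) hr (hlow v)
  have hu := mul_le_mul_of_nonneg_left (hre u) hb.le
  have hv := hre v
  rw [norm_besselBKernel, div_mul_eq_mul_div, ← Real.exp_add, ← Real.exp_add]
  refine div_le_div₀ (by positivity) (Real.exp_le_exp.2 ?_) hd (hsep u v)
  simp only [Complex.add_re, Complex.div_ofNat_re]
  linarith

end Contour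

theorem besselB_kernel_square_integrable_general
    (ν a₁ aj : ℝ) (ha₁ : 0 < a₁) (haj : a₁ ≤ aj)
    (γ : ℝ → ℂ) (hγ : ContDiff ℝ 1 γ)
    (M : ℝ) (hM : ∀ u : ℝ, ‖deriv γ u‖ ≤ M)
    (r : ℝ) (hr : 0 < r) (hlow : ∀ u : ℝ, r ≤ ‖γ u‖)
    (c C : ℝ) (hc : 0 < c) (hre : ∀ u : ℝ, (γ u).re ≤ -c * |u| + C)
    (d : ℝ) (hd : 0 < d) (hsep : ∀ u v : ℝ, d ≤ ‖γ u - (γ v)⁻¹‖) :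
    Integrable (fun p : ℝ × ℝ =>
      ‖Complex.exp ((ν : ℂ) * Complex.log ((γ p.2)⁻¹)) *
          Complex.exp (-(aj : ℂ) / γ p.2 + γ p.2 / 4) *
          Complex.exp (γ p.1 * ((aj : ℂ) - (a₁ : ℂ) / 2)) /
          (γ p.1 - (γ p.2)⁻¹)‖ ^ 2
        * ‖deriv γ p.1‖ * (‖deriv γ p.2‖ / ‖γ p.2‖ ^ 2))
      (volume : Measure (ℝ × ℝ)) := by
  have hb : 0 < aj - a₁ / 2 := by linarith
  have hM0 : 0 ≤ M := (norm_nonneg _).trans (hM 0)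
  obtain ⟨K, hK⟩ := exists_norm_besselBKernel_le (hγ.differentiable one_ne_zero) hM hr hlow
    hre hd hsep hc ν hb
  have hmeas : Measurable fun p : ℝ × ℝ =>
      ‖besselBKernel ν a₁ aj γ p.1 p.2‖ ^ 2 * ‖deriv γ p.1‖ * (‖deriv γ p.2‖ / ‖γ p.2‖ ^ 2) := by
    have hγm : Measurable γ := hγ.continuous.measurable
    have := measurable_besselBKernel ν a₁ aj hγm
    have := measurable_deriv γ
    fun_prop
  refine integrable_of_norm_le_exp_neg_mul_abs_prod (K := K ^ 2 * M * (M / r ^ 2))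
    (by positivity : 0 < 2 * ((aj - a₁ / 2) * c)) (by positivity : 0 < c / 4)
    hmeas.aestronglyMeasurable fun ⟨u, v⟩ => ?_
  rw [Real.norm_of_nonneg (by positivity)]
  calc ‖besselBKernel ν a₁ aj γ u v‖ ^ 2 * ‖deriv γ u‖ * (‖deriv γ v‖ / ‖γ v‖ ^ 2)
      ≤ (K * (Real.exp (-((aj - a₁ / 2) * c) * |u|) * Real.exp (-(c / 8) * |v|))) ^ 2 * M *
          (M / r ^ 2) := by
        gcongr
        exacts [hK u v, hM u, hM v, hlow v]
    _ = _ := by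
        simp only [mul_pow, ← Real.exp_nat_mul]
        ring_nf

/-- square-integrability (Hilbert–Schmidt property) of the kernel
`ℬ_{a_j}(s,t) = (2πi)⁻¹ s^{ν} e^{−a_j s + 1/(4s)} e^{t(a_j − a₁/2)}(t−s)⁻¹`
along the parametrized contours `t = γ(u)`, `s = 1/γ(v)`. -/
theorem besselB_kernel_square_integrable
    (ν a₁ aj : ℝ) (hν : -1 < ν) (ha₁ : 0 < a₁) (haj : a₁ ≤ aj)
    (γ : ℝ → ℂ) (hγ : ContDiff ℝ 1 γ)
    (M : ℝ) (hM : ∀ u : ℝ, ‖deriv γ u‖ ≤ M)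
    (hcut : ∀ u : ℝ, γ u ∉ Complex.ofReal '' Set.Iic (0 : ℝ))
    (r : ℝ) (hr : 0 < r) (hlow : ∀ u : ℝ, r ≤ ‖γ u‖)
    (c C : ℝ) (hc : 0 < c) (hre : ∀ u : ℝ, (γ u).re ≤ -c * |u| + C)
    (d : ℝ) (hd : 0 < d) (hsep : ∀ u v : ℝ, d ≤ ‖γ u - (γ v)⁻¹‖) :
    Integrable (fun p : ℝ × ℝ =>
      ‖Complex.exp ((ν : ℂ) * Complex.log ((γ p.2)⁻¹)) *
          Complex.exp (-(aj : ℂ) / γ p.2 + γ p.2 / 4) *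
          Complex.exp (γ p.1 * ((aj : ℂ) - (a₁ : ℂ) / 2)) /
          (γ p.1 - (γ p.2)⁻¹)‖ ^ 2
        * ‖deriv γ p.1‖ * (‖deriv γ p.2‖ / ‖γ p.2‖ ^ 2))
      (volume : Measure (ℝ × ℝ)) :=
  besselB_kernel_square_integrable_general ν a₁ aj ha₁ haj γ hγ M hM r hr hlow c C hc hre d hd hsep
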